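/- Fix a labeling of T_{3,∞} and ℓ ≥ 2. The subgroup Q̃_{ℓ,∞} has infinite index in Aut(T_{3,∞}). -/

import Mathlib

/-!
Nodes of the infinite rooted `d`-ary tree `T_{d,∞}` are identified with their
labels, i.e. finite words over `Fin d`; the node below `s₁…s_m` is `s₁…s_{m-1}`.
A tree automorphism is a permutation of the nodes preserving levels (word
length) and the descendant relation (list prefix).
-/

namespace Arboreal

/-- The map induced by `σ` on the labels of the `d^n` nodes lying `n` levels
above the node labeled `y` (junk value if the lengths do not work out, which
cannot happen for a tree automorphism). -/
noncomputable def localMap (d n : ℕ) (σ : Equiv.Perm (List (Fin d)))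
    (y : List (Fin d)) (w : List.Vector (Fin d) n) : List.Vector (Fin d) n :=
  if h : ((σ (y ++ w.toList)).drop y.length).length = n then
    ⟨(σ (y ++ w.toList)).drop y.length, h⟩ else w

/-- `sgn d n σ y`: the sign of the permutation of the set `{0,…,d-1}^n` of
labels induced by `σ` on the nodes `n` levels above `y` (by convention `1`
if this map fails to be a bijection). -/
noncomputable def sgn (d n : ℕ) (σ : Equiv.Perm (List (Fin d)))
    (y : List (Fin d)) : ℤˣ :=
  if h : Function.Bijective (localMap d n σ y) then
    Equiv.Perm.sign (Equiv.ofBijective _ h) else 1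

/-- A permutation of the set of nodes of `T_{d,∞}` is a tree automorphism iff
it preserves levels and the descendant (prefix) relation. -/
def IsTreeAut (d : ℕ) (σ : Equiv.Perm (List (Fin d))) : Prop :=
  (∀ w, (σ w).length = w.length) ∧
    ∀ w₁ w₂ : List (Fin d), w₁ <+: w₂ → σ w₁ <+: σ w₂

/-!
`twist x f` permutes the children of the node `x` by a permutation `f` of the letters and
carries their subtrees along rigidly. Seen from a node `y` with `x = y ++ z`, it permutes the
`3^n` words of length `n` as an odd number, `3^(n - |z| - 1)`, of disjoint copies of `f` when
`|z| < n`, and trivially otherwise. So for a transposition `f` the product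
`sgn_ℓ · sgn_{ℓ-1}` at `y` is `-1` exactly when `|z| = ℓ - 1`. With `gᵢ` the twist by `(0 1)`
at `0^(i+1) 0^(ℓ-1)`, for `i < j` the element `gᵢ⁻¹ gⱼ` has product `-1` at `0^(i+1)` but `1`
at the root, so the cosets of `Q̃_{ℓ,∞}` containing the `gᵢ` are pairwise distinct.
-/

section Twist

variable {α : Type*}

lemma modifyHead_prefix_modifyHead {u v : List α} (f : α → α) (h : u <+: v) :
    u.modifyHead f <+: v.modifyHead f := by
  obtain ⟨r, rfl⟩ := h
  cases u <;> simp

variable [DecidableEq α]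

def twistFun (x : List α) (f : α → α) (w : List α) : List α :=
  if x <+: w then x ++ (w.drop x.length).modifyHead f else w

lemma twistFun_append (x u : List α) (f : α → α) :
    twistFun x f (x ++ u) = x ++ u.modifyHead f := by
  simp [twistFun]

lemma twistFun_of_not_prefix {x w : List α} (f : α → α) (h : ¬x <+: w) :
    twistFun x f w = w :=
  if_neg h

lemma twistFun_of_length_le {x w : List α} (f : α → α) (h : w.length ≤ x.length) :
    twistFun x f w = w := by
  by_cases hx : x <+: w
  · obtain ⟨u, rfl⟩ := hx
    obtain rfl : u = [] := by simpa using h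
    simpa using twistFun_append x [] f
  · exact twistFun_of_not_prefix f hx

lemma twistFun_twistFun (x : List α) (f g : α → α) (w : List α) :
    twistFun x f (twistFun x g w) = twistFun x (f ∘ g) w := by
  by_cases h : x <+: w
  · obtain ⟨u, rfl⟩ := h
    simp [twistFun_append, List.modifyHead_modifyHead]
  · rw [twistFun_of_not_prefix g h, twistFun_of_not_prefix f h, twistFun_of_not_prefix _ h]

lemma twistFun_id (x w : List α) : twistFun x id w = w := by
  by_cases h : x <+: w
  · obtain ⟨u, rfl⟩ := h
    simp [twistFun_append]
  · exact twistFun_of_not_prefix id h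

lemma length_twistFun (x : List α) (f : α → α) (w : List α) :
    (twistFun x f w).length = w.length := by
  by_cases h : x <+: w
  · obtain ⟨u, rfl⟩ := h
    simp [twistFun_append]
  · rw [twistFun_of_not_prefix f h]

lemma twistFun_append_append (y z w : List α) (f : α → α) :
    twistFun (y ++ z) f (y ++ w) = y ++ twistFun z f w := by
  by_cases h : z <+: w
  · obtain ⟨u, rfl⟩ := h
    simp only [← List.append_assoc, twistFun_append]
  · rw [twistFun_of_not_prefix f h, twistFun_of_not_prefix f (by simpa using h)]

lemma twistFun_nil_cons (f : α → α) (b : α) (w : List α) :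
    twistFun [] f (b :: w) = f b :: w :=
  twistFun_append [] (b :: w) f

lemma twistFun_cons_cons (a : α) (z : List α) (f : α → α) (b : α) (w : List α) :
    twistFun (a :: z) f (b :: w) = if b = a then a :: twistFun z f w else b :: w := by
  split_ifs with h
  · exact h ▸ twistFun_append_append [b] z w f
  · exact twistFun_of_not_prefix f (by simp [List.cons_prefix_cons, Ne.symm h])

lemma twistFun_prefix_twistFun (x : List α) (f : α → α) {w₁ w₂ : List α} (h : w₁ <+: w₂) :
    twistFun x f w₁ <+: twistFun x f w₂ := by
  by_cases h₁ : x <+: w₁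
  · obtain ⟨u₁, rfl⟩ := h₁
    obtain ⟨u₂, rfl⟩ := (List.prefix_append x u₁).trans h
    rw [twistFun_append, twistFun_append, List.prefix_append_right_inj]
    exact modifyHead_prefix_modifyHead f ((List.prefix_append_right_inj x).mp h)
  · rw [twistFun_of_not_prefix f h₁]
    by_cases h₂ : x <+: w₂
    · obtain ⟨u₂, rfl⟩ := h₂
      rw [twistFun_append]
      -- two prefixes of the same word are comparable
      exact ((List.prefix_or_prefix_of_prefix h (List.prefix_append x u₂)).resolve_right h₁).trans
        (List.prefix_append _ _)
    · rwa [twistFun_of_not_prefix f h₂]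

def twist (x : List α) (f : Equiv.Perm α) : Equiv.Perm (List α) where
  toFun := twistFun x f
  invFun := twistFun x f.symm
  left_inv w := by simp [twistFun_twistFun, twistFun_id]
  right_inv w := by simp [twistFun_twistFun, twistFun_id]

lemma twist_inv (x : List α) (f : Equiv.Perm α) : (twist x f)⁻¹ = twist x f⁻¹ := rfl

end Twist

lemma isTreeAut_twist {d : ℕ} (x : List (Fin d)) (f : Equiv.Perm (Fin d)) :
    IsTreeAut d (twist x f) :=
  ⟨length_twistFun x f, fun _ _ => twistFun_prefix_twistFun x f⟩

section TreeAut

variable {d : ℕ} {σ τ : Equiv.Perm (List (Fin d))}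

lemma isTreeAut_one : IsTreeAut d 1 := ⟨fun _ => rfl, fun _ _ h => h⟩

lemma IsTreeAut.mul (hσ : IsTreeAut d σ) (hτ : IsTreeAut d τ) : IsTreeAut d (σ * τ) :=
  ⟨fun w => (hσ.1 _).trans (hτ.1 w), fun _ _ h => hσ.2 _ _ (hτ.2 _ _ h)⟩

lemma IsTreeAut.prefix_of_prefix (hσ : IsTreeAut d σ) {u v : List (Fin d)}
    (h : σ u <+: σ v) : u <+: v := by
  have hle : u.length ≤ v.length := by simpa [hσ.1] using h.length_le
  have hσt : σ (v.take u.length) <+: σ v := hσ.2 _ _ (v.take_prefix _)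
  have ht : σ (v.take u.length) = σ u := by
    rw [List.prefix_iff_eq_take.mp hσt, List.prefix_iff_eq_take.mp h, hσ.1, hσ.1,
      List.length_take, min_eq_left hle]
  exact σ.injective ht ▸ v.take_prefix _

lemma IsTreeAut.inv (hσ : IsTreeAut d σ) : IsTreeAut d σ⁻¹ := by
  refine ⟨fun w => ?_, fun w₁ w₂ h => hσ.prefix_of_prefix ?_⟩
  · simpa using (hσ.1 (σ⁻¹ w)).symm
  · simpa using h

def treeAut (d : ℕ) : Subgroup (Equiv.Perm (List (Fin d))) where
  carrier := {σ | IsTreeAut d σ}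
  one_mem' := isTreeAut_one
  mul_mem' := IsTreeAut.mul
  inv_mem' := IsTreeAut.inv

lemma IsTreeAut.apply_append (hσ : IsTreeAut d σ) (y w : List (Fin d)) :
    σ (y ++ w) = σ y ++ (σ (y ++ w)).drop y.length := by
  have h : σ y <+: σ (y ++ w) := hσ.2 _ _ (List.prefix_append _ _)
  conv_lhs => rw [← List.take_append_drop (σ y).length (σ (y ++ w)),
    ← List.prefix_iff_eq_take.mp h]
  rw [hσ.1]

lemma IsTreeAut.toList_localMap (hσ : IsTreeAut d σ) {n : ℕ} (y : List (Fin d))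
    (w : List.Vector (Fin d) n) :
    (localMap d n σ y w).toList = (σ (y ++ w.toList)).drop y.length := by
  have hlen : ((σ (y ++ w.toList)).drop y.length).length = n := by simp [hσ.1]
  simp [localMap, hlen]

lemma localMap_mul (hσ : IsTreeAut d σ) (hτ : IsTreeAut d τ) (n : ℕ) (y : List (Fin d)) :
    localMap d n (σ * τ) y = localMap d n σ (τ y) ∘ localMap d n τ y := by
  funext w
  apply List.Vector.toList_injective
  rw [Function.comp_apply, (hσ.mul hτ).toList_localMap, hσ.toList_localMap,
    hτ.toList_localMap, Equiv.Perm.mul_apply, ← hτ.apply_append, hτ.1]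

lemma IsTreeAut.bijective_localMap (hσ : IsTreeAut d σ) (n : ℕ) (y : List (Fin d)) :
    Function.Bijective (localMap d n σ y) := by
  refine Finite.injective_iff_bijective.mp fun w₁ w₂ hw => ?_
  have h : σ (y ++ w₁.toList) = σ (y ++ w₂.toList) := by
    rw [hσ.apply_append, hσ.apply_append y w₂.toList, ← hσ.toList_localMap,
      ← hσ.toList_localMap, hw]
  exact List.Vector.toList_injective (List.append_cancel_left (σ.injective h))

lemma sgn_eq_sign {n : ℕ} {y : List (Fin d)} {π : Equiv.Perm (List.Vector (Fin d) n)}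
    (h : localMap d n σ y = π) : sgn d n σ y = Equiv.Perm.sign π := by
  rw [sgn, dif_pos (h ▸ π.bijective)]
  congr
  exact Equiv.ext (congrFun h)

lemma sgn_mul (hσ : IsTreeAut d σ) (hτ : IsTreeAut d τ) (n : ℕ) (y : List (Fin d)) :
    sgn d n (σ * τ) y = sgn d n σ (τ y) * sgn d n τ y := by
  rw [sgn_eq_sign (π := Equiv.ofBijective _ (hσ.bijective_localMap n (τ y)) *
      Equiv.ofBijective _ (hτ.bijective_localMap n y)) (localMap_mul hσ hτ n y),
    sgn_eq_sign (π := Equiv.ofBijective _ (hσ.bijective_localMap n (τ y))) rfl,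
    sgn_eq_sign (π := Equiv.ofBijective _ (hτ.bijective_localMap n y)) rfl, map_mul]

lemma sgn_one (n : ℕ) (y : List (Fin d)) : sgn d n 1 y = 1 := by
  simpa using sgn_mul isTreeAut_one isTreeAut_one n y

end TreeAut

section TwistVec

variable {α : Type*} [DecidableEq α]

def vectorConsEquiv (α : Type*) (n : ℕ) : α × List.Vector α n ≃ List.Vector α (n + 1) where
  toFun p := p.1 ::ᵥ p.2
  invFun v := (v.head, v.tail)
  left_inv p := by simp
  right_inv v := by simp

def twistVec (z : List α) (f : Equiv.Perm α) (n : ℕ) : Equiv.Perm (List.Vector α n) :=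
  (twist z f).subtypePerm fun w => by simp [twist, length_twistFun]

lemma toList_twistVec (z : List α) (f : Equiv.Perm α) {n : ℕ} (v : List.Vector α n) :
    (twistVec z f n v).toList = twistFun z f v.toList := rfl

lemma twistVec_of_le_length {z : List α} (f : Equiv.Perm α) {n : ℕ} (h : n ≤ z.length) :
    twistVec z f n = 1 :=
  Equiv.ext fun v => List.Vector.toList_injective <| by
    rw [toList_twistVec, twistFun_of_length_le f (by simpa using h)]
    rfl

lemma twistVec_nil (f : Equiv.Perm α) (n : ℕ) :
    twistVec [] f (n + 1) = (vectorConsEquiv α n).permCongr (Equiv.prodCongrLeft fun _ => f) := by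
  ext v : 1
  apply List.Vector.toList_injective
  obtain ⟨b, w, rfl⟩ : ∃ b w, v = b ::ᵥ w := ⟨_, _, v.cons_head_tail.symm⟩
  simp [toList_twistVec, vectorConsEquiv, Equiv.permCongr_apply, twistFun_nil_cons]

lemma twistVec_cons (a : α) (z : List α) (f : Equiv.Perm α) (n : ℕ) :
    twistVec (a :: z) f (n + 1) =
      (vectorConsEquiv α n).permCongr (Equiv.Perm.prodExtendRight a (twistVec z f n)) := by
  ext v : 1
  apply List.Vector.toList_injective
  obtain ⟨b, w, rfl⟩ : ∃ b w, v = b ::ᵥ w := ⟨_, _, v.cons_head_tail.symm⟩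
  simp only [vectorConsEquiv, Equiv.permCongr_apply, Equiv.coe_fn_mk, Equiv.coe_fn_symm_mk,
    List.Vector.head_cons, List.Vector.tail_cons, List.Vector.toList_cons, toList_twistVec,
    twistFun_cons_cons]
  by_cases h : b = a
  · subst h
    simp [toList_twistVec]
  · simp [h, Equiv.Perm.prodExtendRight_apply_ne _ h]

lemma sign_twistVec [Fintype α] (z : List α) (f : Equiv.Perm α) (n : ℕ) :
    Equiv.Perm.sign (twistVec z f n) =
      if z.length < n then Equiv.Perm.sign f ^ Fintype.card α ^ (n - z.length - 1) else 1 := by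
  induction z generalizing n with
  | nil =>
    cases n with
    | zero => simp [twistVec_of_le_length]
    | succ n =>
      simp [twistVec_nil, Equiv.Perm.sign_prodCongrLeft, Finset.prod_const, card_vector]
  | cons a z ih =>
    cases n with
    | zero => simp [twistVec_of_le_length]
    | succ n =>
      simp [twistVec_cons, Equiv.Perm.sign_prodExtendRight, ih]

end TwistVec

lemma localMap_twist_append {d : ℕ} (y z : List (Fin d)) (f : Equiv.Perm (Fin d)) (n : ℕ) :
    localMap d n (twist (y ++ z) f) y = twistVec z f n := by
  funext w
  apply List.Vector.toList_injective
  rw [(isTreeAut_twist _ f).toList_localMap, toList_twistVec]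
  exact (congrArg (List.drop y.length) (twistFun_append_append y z w.toList f)).trans
    (List.drop_left ..)

lemma sgn_twist_append_of_sign_eq_neg_one {d : ℕ} (hd : Odd d) {f : Equiv.Perm (Fin d)}
    (hf : Equiv.Perm.sign f = -1) (y z : List (Fin d)) (n : ℕ) :
    sgn d n (twist (y ++ z) f) y = if z.length < n then -1 else 1 := by
  rw [sgn_eq_sign (localMap_twist_append y z f n), sign_twistVec, hf, Fintype.card_fin,
    Odd.neg_one_pow (hd.pow)]

noncomputable def sgnPair (d ℓ : ℕ) (σ : Equiv.Perm (List (Fin d))) (y : List (Fin d)) : ℤˣ :=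
  sgn d ℓ σ y * sgn d (ℓ - 1) σ y

section SgnPair

variable {d ℓ : ℕ} {σ τ : Equiv.Perm (List (Fin d))}

lemma sgnPair_mul (hσ : IsTreeAut d σ) (hτ : IsTreeAut d τ) (y : List (Fin d)) :
    sgnPair d ℓ (σ * τ) y = sgnPair d ℓ σ (τ y) * sgnPair d ℓ τ y := by
  simp only [sgnPair, sgn_mul hσ hτ, mul_mul_mul_comm]

lemma sgnPair_inv (hσ : IsTreeAut d σ) (y : List (Fin d)) :
    sgnPair d ℓ σ⁻¹ y = (sgnPair d ℓ σ (σ⁻¹ y))⁻¹ := by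
  refine eq_inv_of_mul_eq_one_right ?_
  rw [← sgnPair_mul hσ hσ.inv, mul_inv_cancel, sgnPair, sgn_one, sgn_one, mul_one]

def qTilde (d ℓ : ℕ) : Subgroup (Equiv.Perm (List (Fin d))) where
  carrier := {σ | IsTreeAut d σ ∧ ∀ y, sgnPair d ℓ σ y = sgnPair d ℓ σ []}
  one_mem' := ⟨isTreeAut_one, fun y => by simp only [sgnPair, sgn_one]⟩
  mul_mem' := by
    rintro σ τ ⟨hσ, hσc⟩ ⟨hτ, hτc⟩
    exact ⟨hσ.mul hτ, fun y => by rw [sgnPair_mul hσ hτ, sgnPair_mul hσ hτ, hσc, hτc, hσc (τ [])]⟩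
  inv_mem' := by
    rintro σ ⟨hσ, hσc⟩
    exact ⟨hσ.inv, fun y => by rw [sgnPair_inv hσ, sgnPair_inv hσ, hσc, hσc (σ⁻¹ [])]⟩

end SgnPair

section OddDegree

variable {d ℓ : ℕ} {f : Equiv.Perm (Fin d)}

lemma sgnPair_twist_append (hd : Odd d) (hf : Equiv.Perm.sign f = -1) (hℓ : 0 < ℓ)
    (y z : List (Fin d)) :
    sgnPair d ℓ (twist (y ++ z) f) y = if z.length + 1 = ℓ then -1 else 1 := by
  rw [sgnPair, sgn_twist_append_of_sign_eq_neg_one hd hf,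
    sgn_twist_append_of_sign_eq_neg_one hd hf]
  split_ifs <;> first | rfl | omega

lemma twist_inv_mul_twist_notMem_qTilde (hd : Odd d) (hf : Equiv.Perm.sign f = -1)
    {y z₁ z₂ : List (Fin d)} (hy : y ≠ []) (hz₁ : z₁.length + 1 = ℓ) (hz₂ : ℓ ≤ z₂.length) :
    (twist (y ++ z₁) f)⁻¹ * twist (y ++ z₂) f ∉ qTilde d ℓ := by
  rintro ⟨-, hconst⟩
  have hℓ : 0 < ℓ := by omega
  have hf' : Equiv.Perm.sign f⁻¹ = -1 := by rw [Equiv.Perm.sign_inv, hf]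
  have hsplit : ∀ w : List (Fin d), w.length ≤ (y ++ z₂).length →
      sgnPair d ℓ ((twist (y ++ z₁) f)⁻¹ * twist (y ++ z₂) f) w
        = sgnPair d ℓ (twist (y ++ z₁) f⁻¹) w * sgnPair d ℓ (twist (y ++ z₂) f) w :=
    fun w hw => by
      rw [sgnPair_mul (isTreeAut_twist _ f).inv (isTreeAut_twist _ f), twist_inv]
      congr 2
      exact twistFun_of_length_le f hw
  have hy' : 0 < y.length := List.length_pos_iff.mpr hy
  have hroot : sgnPair d ℓ ((twist (y ++ z₁) f)⁻¹ * twist (y ++ z₂) f) [] = 1 := by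
    have h₁ := sgnPair_twist_append hd hf' hℓ [] (y ++ z₁)
    have h₂ := sgnPair_twist_append hd hf hℓ [] (y ++ z₂)
    rw [List.nil_append] at h₁ h₂
    rw [hsplit [] (Nat.zero_le _), h₁, h₂, List.length_append, List.length_append,
      if_neg (by omega), if_neg (by omega), mul_one]
  -- at the node `y` only the first twist sits exactly `ℓ - 1` levels above
  have hnode : sgnPair d ℓ ((twist (y ++ z₁) f)⁻¹ * twist (y ++ z₂) f) y = -1 := by
    rw [hsplit y (by simp), sgnPair_twist_append hd hf' hℓ, sgnPair_twist_append hd hf hℓ,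
      if_pos hz₁, if_neg (by omega), mul_one]
  have h := hconst y
  rw [hnode, hroot] at h
  exact absurd h (by decide)

end OddDegree

theorem qTilde_relIndex_treeAut_eq_zero {d ℓ : ℕ} (hd : Odd d) (hd₁ : 1 < d) (hℓ : 0 < ℓ) :
    (qTilde d ℓ).relIndex (treeAut d) = 0 := by
  let a : Fin d := ⟨0, by omega⟩
  let s : Equiv.Perm (Fin d) := Equiv.swap a ⟨1, hd₁⟩
  have hs : Equiv.Perm.sign s = -1 := Equiv.Perm.sign_swap (by simp [a, Fin.ext_iff])
  let g (i : ℕ) : treeAut d :=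
    ⟨twist (List.replicate (i + 1) a ++ List.replicate (ℓ - 1) a) s, isTreeAut_twist _ _⟩
  rw [Subgroup.relIndex, Subgroup.index_eq_zero_iff_infinite]
  refine Infinite.of_injective (fun i => (g i : treeAut d ⧸ (qTilde d ℓ).subgroupOf (treeAut d)))
    (Function.Injective.of_lt_imp_ne fun i j hij hg => ?_)
  rw [QuotientGroup.eq, Subgroup.mem_subgroupOf, Subgroup.coe_mul, Subgroup.coe_inv] at hg
  have hgj : (g j : Equiv.Perm (List (Fin d))) =
      twist (List.replicate (i + 1) a ++ (List.replicate (j - i) a ++ List.replicate (ℓ - 1) a))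
        s := by
    rw [← List.append_assoc, ← List.replicate_add (i + 1), Nat.add_right_comm,
      Nat.add_sub_cancel' hij.le]
  rw [hgj] at hg
  exact twist_inv_mul_twist_notMem_qTilde hd hs (by simp) (by simp; omega) (by simp; omega) hg

/-- for a fixed labeling of `T_{3,∞}` and `ℓ ≥ 2`, the
subgroup `Q̃_{ℓ,∞}` has infinite index (relative index `0` in Mathlib's
convention) in the full automorphism group `Aut(T_{3,∞})`. -/
theorem Qtilde_infinite_index (ℓ : ℕ) (hℓ : 2 ≤ ℓ) :
    ∃ A Htil : Subgroup (Equiv.Perm (List (Fin 3))),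
      (A : Set (Equiv.Perm (List (Fin 3)))) = {σ | IsTreeAut 3 σ} ∧
      (Htil : Set (Equiv.Perm (List (Fin 3)))) =
        {σ | IsTreeAut 3 σ ∧ ∀ y : List (Fin 3),
          sgn 3 ℓ σ y * sgn 3 (ℓ - 1) σ y =
            sgn 3 ℓ σ [] * sgn 3 (ℓ - 1) σ []} ∧
      Htil.relIndex A = 0 := by
  exact ⟨treeAut 3, qTilde 3 ℓ, rfl, rfl,
    qTilde_relIndex_treeAut_eq_zero (by decide) (by decide) (by omega)⟩

end Arboreal
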